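/- If additionally either (a) the spectrum of L is contained in [0, 1 + 1/(2δ)], or (b) λ_{↑2}(L) ≤ 1/δ, then λ_{↓2}(q(δ,L)) = q(δ, λ_{↑2}(L)) exactly. -/

import Mathlib

/-!
In the sense of the functional calculus `M = q(δ, L)`, so the eigenvalues of `M` are the values
of `q δ` at those of `L`. Write `λ₁ ≤ λ₂` for the two smallest eigenvalues of `L`. Since
`q δ y - q δ x = (y - x) (δ (x + y) - (1 + 2δ))`, `q δ` reverses the order of `x ≤ y` as soon as
`δ (x + y) ≤ 1 + 2δ`, and either hypothesis gives this whenever `x ≤ λ₂` and `x, y` lie in the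
spectrum. Hence `q(δ, λ₁)` is the largest eigenvalue of `M`, and `q(δ, λ₂)` the largest among the
remaining ones.
-/

open Matrix Finset

noncomputable def q (δ lam : ℝ) : ℝ := -(1 + 2 * δ) * lam + δ * lam ^ 2

/-- The eigenvalues of a Hermitian real matrix, sorted in increasing order (with
multiplicity). -/
noncomputable def eigList {n : ℕ} (A : Matrix (Fin n) (Fin n) ℝ) (hA : A.IsHermitian) :
    List ℝ :=
  (Multiset.map hA.eigenvalues Finset.univ.val).sort (· ≤ ·)

/-- Second-smallest eigenvalue. -/
noncomputable def lamUp2 {n : ℕ} (A : Matrix (Fin n) (Fin n) ℝ) (hA : A.IsHermitian) : ℝ :=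
  (eigList A hA).getD 1 0

/-- Largest eigenvalue. -/
noncomputable def lamDown1 {n : ℕ} (A : Matrix (Fin n) (Fin n) ℝ) (hA : A.IsHermitian) : ℝ :=
  (eigList A hA).reverse.getD 0 0

/-- Second-largest eigenvalue. -/
noncomputable def lamDown2 {n : ℕ} (A : Matrix (Fin n) (Fin n) ℝ) (hA : A.IsHermitian) : ℝ :=
  (eigList A hA).reverse.getD 1 0

namespace List

variable {α : Type*} {r : α → α → Prop} [Std.Antisymm r]

theorem Pairwise.head_eq_of_forall_rel {x a : α} {l : List α} (hl : (x :: l).Pairwise r)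
    (ha : a ∈ x :: l) (har : ∀ y ∈ x :: l, r a y) : x = a := by
  rcases mem_cons.1 ha with rfl | ha
  · rfl
  · exact antisymm (rel_of_pairwise_cons hl ha) (har x mem_cons_self)

theorem Pairwise.getD_one_eq [DecidableEq α] {l : List α} (hl : l.Pairwise r) {a b : α}
    (ha : a ∈ l) (har : ∀ y ∈ l, r a y) (hb : b ∈ l.erase a) (hbr : ∀ y ∈ l.erase a, r b y)
    (d : α) : l.getD 1 d = b := by
  match l, hl, ha, hb with
  | x :: l', hl, ha, hb =>
    obtain rfl := hl.head_eq_of_forall_rel ha har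
    rw [erase_cons_head] at hb hbr
    match l', hl, hb with
    | y :: l'', hl, hb => exact (hl.of_cons).head_eq_of_forall_rel hb hbr

end List

namespace Multiset

variable {α β : Type*} [LinearOrder α] [LinearOrder β]

theorem sort_getD_one_eq {t : Multiset α} {a b : α} (ha : a ∈ t) (hat : ∀ x ∈ t, a ≤ x)
    (hb : b ∈ t.erase a) (hbt : ∀ x ∈ t.erase a, b ≤ x) (d : α) :
    (t.sort (· ≤ ·)).getD 1 d = b := by
  have hcoe : ∀ x, x ∈ (t.sort (· ≤ ·)).erase a ↔ x ∈ t.erase a := fun x => by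
    rw [← mem_coe, ← coe_erase, sort_eq]
  exact (pairwise_sort t _).getD_one_eq (by simpa using ha) (by simpa using hat)
    ((hcoe b).2 hb) (fun x hx => hbt x ((hcoe x).1 hx)) d

theorem sort_reverse_getD_one_eq {t : Multiset α} {a b : α} (ha : a ∈ t) (hat : ∀ x ∈ t, x ≤ a)
    (hb : b ∈ t.erase a) (hbt : ∀ x ∈ t.erase a, x ≤ b) (d : α) :
    (t.sort (· ≤ ·)).reverse.getD 1 d = b := by
  have hcoe : ∀ x, x ∈ (t.sort (· ≤ ·)).reverse.erase a ↔ x ∈ t.erase a := fun x => by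
    rw [← mem_coe, ← coe_erase, coe_reverse, sort_eq]
  exact (List.pairwise_reverse.2 (pairwise_sort t _)).getD_one_eq (r := (· ≥ ·))
    (by simpa using ha) (by simpa using hat) ((hcoe b).2 hb) (fun x hx => hbt x ((hcoe x).1 hx)) d

theorem sort_reverse_getD_one_map {t : Multiset α} (ht : 2 ≤ card t) {f : α → β} (d : α)
    (hf : ∀ x ∈ t, ∀ y ∈ t, x ≤ y → x ≤ (t.sort (· ≤ ·)).getD 1 d → f y ≤ f x) (e : β) :
    ((t.map f).sort (· ≤ ·)).reverse.getD 1 e = f ((t.sort (· ≤ ·)).getD 1 d) := by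
  obtain ⟨a, ha, hamin⟩ := exists_min_image id (s := t) (card_pos.1 (by omega))
  obtain ⟨b, hb, hbmin⟩ := exists_min_image id (s := t.erase a)
    (card_pos.1 (by rw [card_erase_of_mem ha, Nat.pred_eq_sub_one]; omega))
  have hb_t : b ∈ t := mem_of_mem_erase hb
  rw [sort_getD_one_eq ha hamin hb hbmin d] at hf ⊢
  have herase : (t.map f).erase (f a) = (t.erase a).map f := (map_erase_of_mem _ _ ha).symm
  refine sort_reverse_getD_one_eq (mem_map_of_mem _ ha) ?_ (herase ▸ mem_map_of_mem _ hb) ?_ e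
  · simp only [mem_map]
    rintro _ ⟨y, hy, rfl⟩
    exact hf a ha y hy (hamin y hy) (hamin b hb_t)
  · simp only [herase, mem_map]
    rintro _ ⟨y, hy, rfl⟩
    exact hf b hb_t y (mem_of_mem_erase hy) (hbmin y hy) le_rfl

end Multiset

namespace Matrix.IsHermitian

variable {ι 𝕜 : Type*} [Fintype ι] [DecidableEq ι] [RCLike 𝕜] {A : Matrix ι ι 𝕜}

theorem eigenvalues_cfc (hA : A.IsHermitian) (f : ℝ → ℝ) {B : Matrix ι ι 𝕜} (hB : B.IsHermitian)
    (hBA : B = cfc f A) :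
    Multiset.map hB.eigenvalues univ.val = Multiset.map (f ∘ hA.eigenvalues) univ.val := by
  subst hBA
  have hroots := hB.roots_charpoly_eq_eigenvalues
  rw [hA.charpoly_cfc_eq,
    Polynomial.roots_prod _ _ (by simp [prod_ne_zero_iff, Polynomial.X_sub_C_ne_zero])] at hroots
  simp only [Polynomial.roots_X_sub_C, Multiset.bind_singleton] at hroots
  refine (Multiset.map_injective (RCLike.ofReal_injective (K := 𝕜)) ?_).symm
  rw [Multiset.map_map, Multiset.map_map]
  exact hroots

end Matrix.IsHermitian

theorem cfc_mul_add_mul_sq {A : Type*} [Ring A] [StarRing A] [TopologicalSpace A] [Algebra ℝ A]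
    [ContinuousFunctionalCalculus ℝ A IsSelfAdjoint] {a : A} (ha : IsSelfAdjoint a) (b c : ℝ) :
    cfc (fun x => b * x + c * x ^ 2) a = b • a + c • (a * a) := by
  rw [cfc_add a (fun x => b * x) (fun x => c * x ^ 2), cfc_const_mul b (fun x => x) a,
    cfc_const_mul c (fun x => x ^ 2) a, cfc_pow (fun x => x) 2 a, cfc_id' ℝ a, sq]

theorem q_le_q_of_mul_add_le {δ x y : ℝ} (hxy : x ≤ y) (h : δ * (x + y) ≤ 1 + 2 * δ) :
    q δ y ≤ q δ x := by
  have : q δ y - q δ x = (y - x) * (δ * (x + y) - (1 + 2 * δ)) := by unfold q; ring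
  nlinarith [mul_nonpos_of_nonneg_of_nonpos (sub_nonneg.2 hxy) (sub_nonpos.2 h)]

theorem q_antitoneOn {δ : ℝ} (hδ : 0 < δ) : AntitoneOn (q δ) (Set.Iic (1 + 1 / (2 * δ))) := by
  intro x hx y hy hxy
  have : δ * (1 + 1 / (2 * δ)) = δ + 1 / 2 := by field_simp
  refine q_le_q_of_mul_add_le hxy ?_
  nlinarith [mul_le_mul_of_nonneg_left (Set.mem_Iic.1 hx) hδ.le,
    mul_le_mul_of_nonneg_left (Set.mem_Iic.1 hy) hδ.le]

theorem q_le_q_of_le_of_le_inv {δ x y : ℝ} (hδ : 0 < δ) (hxy : x ≤ y) (hx : x ≤ 1 / δ)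
    (hy : y ≤ 2) : q δ y ≤ q δ x := by
  have : δ * (1 / δ) = 1 := by field_simp
  refine q_le_q_of_mul_add_le hxy ?_
  nlinarith [mul_le_mul_of_nonneg_left hx hδ.le, mul_le_mul_of_nonneg_left hy hδ.le]

theorem damping_rate_exact {n : ℕ} (hn : 2 ≤ n)
    (L : Matrix (Fin n) (Fin n) ℝ) (hL : L.IsHermitian)
    (hspec : ∀ i, hL.eigenvalues i ∈ Set.Icc (0 : ℝ) 2)
    (δ : ℝ) (hδ : 0 < δ)
    (M : Matrix (Fin n) (Fin n) ℝ)
    (hMdef : M = (-(1 + 2 * δ)) • L + δ • (L * L)) (hM : M.IsHermitian)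
    (hcase : (∀ i, hL.eigenvalues i ≤ 1 + 1 / (2 * δ)) ∨ lamUp2 L hL ≤ 1 / δ) :
    lamDown2 M hM = q δ (lamUp2 L hL) := by
  set s := Multiset.map hL.eigenvalues univ.val with hs
  have hMs : Multiset.map hM.eigenvalues univ.val = s.map (q δ) := by
    rw [hL.eigenvalues_cfc (q δ) hM
      (hMdef.trans (cfc_mul_add_mul_sq hL.isSelfAdjoint _ _).symm), hs, Multiset.map_map]
  have hq_anti : ∀ x ∈ s, ∀ y ∈ s, x ≤ y → x ≤ lamUp2 L hL → q δ y ≤ q δ x := by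
    simp only [s, Multiset.mem_map]
    rintro _ ⟨i, -, rfl⟩ _ ⟨j, -, rfl⟩ hij hi_up2
    rcases hcase with hsmall | hgap
    · exact q_antitoneOn hδ (hsmall i) (hsmall j) hij
    · exact q_le_q_of_le_of_le_inv hδ hij (hi_up2.trans hgap) (hspec j).2
  unfold lamDown2 eigList
  rw [hMs]
  exact Multiset.sort_reverse_getD_one_map (by simpa [s] using hn) 0 hq_anti 0
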